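/- arXiv:1202.4330 — 4 statements merged into one kernel-verified Lean document; each statement's English description precedes it below -/
import Mathlib

section
/- Let M ≥ 2 be an integer and let κ be a weight on finite words over Fin M having geometric decay with constants c ≥ 1 and θ ∈ (0,1). Then the ultrametric space ((Fin M)^ℕ, d_κ) is f-embeddable: there exist L ∈ ℕ, a constant c' ≥ 1 and a map φ : (Fin M)^ℕ → ℝ^L (Euclidean norm) such that (1/c')·d_κ(x,y) ≤ ‖φ(x) − φ(y)‖ ≤ c'·d_κ(x,y) for all x, y. -/
/-- A weight on finite words over `Fin M`: positive, and monotone non-increasing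
along prefixes. -/
def IsWeight {M : ℕ} (κ : List (Fin M) → ℝ) : Prop :=
  (∀ w, 0 < κ w) ∧ ∀ u v : List (Fin M), u <+: v → κ v ≤ κ u

/-- Geometric decay of a weight with constants `c ≥ 1` and `θ ∈ (0,1)`:
`κ(w) ≤ c · θ^(ℓ(w) − ℓ(u)) · κ(u)` whenever `u` is a prefix of `w`. -/
def GeomDecay {M : ℕ} (κ : List (Fin M) → ℝ) (c θ : ℝ) : Prop :=
  ∀ u w : List (Fin M), u <+: w → κ w ≤ c * θ ^ (w.length - u.length) * κ u

-- The ultrametric `d_κ` on `(Fin M)^ℕ`: `d_κ(x,x) = 0` and for `x ≠ y`,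
-- `d_κ(x,y) = κ(x ∧ y)` where `x ∧ y` is the longest common prefix of `x` and `y`.
open Classical in
noncomputable def dkappa {M : ℕ} (κ : List (Fin M) → ℝ) (x y : ℕ → Fin M) : ℝ :=
  if h : x = y then 0
  else κ (List.ofFn fun i : Fin (Nat.find (Function.ne_iff.mp h)) => x i)

/-! The point `x` is sent to `∑ₙ κ(x|n) • e_(n mod J, xₙ)` in `ℝ^(Fin J × Fin M)`, where `x|n` is
the prefix of length `n`. Geometric decay makes the series converge, and if `x` and `y` first
differ at depth `N`, everything from depth `N` on is `O(κ(x|N))`: this is the upper bound.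
For the lower bound pick `J` with `4cθ^J ≤ 1 - θ`: the axis `(N mod J, x_N)` receives `κ(x|N)`
from depth `N`, nothing from depths `N + 1, …, N + J - 1`, and at most `κ(x|N) / 2` from all
deeper levels together. -/

open PiNat Fin.NatCast

section PrefixWord

variable {α : Type*}

def prefixWord (x : ℕ → α) (n : ℕ) : List α :=
  List.ofFn fun i : Fin n => x i

@[simp] lemma prefixWord_length (x : ℕ → α) (n : ℕ) : (prefixWord x n).length = n := by
  simp [prefixWord]

@[simp] lemma prefixWord_zero (x : ℕ → α) : prefixWord x 0 = [] := rfl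

lemma prefixWord_prefix_of_le (x : ℕ → α) {n m : ℕ} (h : n ≤ m) :
    prefixWord x n <+: prefixWord x m := by
  rw [List.prefix_iff_eq_take]
  apply List.ext_getElem <;> simp [prefixWord, h]

lemma prefixWord_congr {x y : ℕ → α} {n : ℕ} (h : ∀ i < n, x i = y i) :
    prefixWord x n = prefixWord y n := by
  simp only [prefixWord, List.ofFn_inj]
  exact funext fun i => h i i.isLt

end PrefixWord

lemma norm_tsum_le_of_geometric {E : Type*} [SeminormedAddCommGroup E] {f : ℕ → E} {C r : ℝ}
    (hr0 : 0 ≤ r) (hr1 : r < 1) (hf : ∀ k, ‖f k‖ ≤ C * r ^ k) :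
    ‖∑' k, f k‖ ≤ C / (1 - r) :=
  tsum_of_norm_bounded ((hasSum_geometric_of_lt_one hr0 hr1).mul_left C) hf

variable {M : ℕ} {κ : List (Fin M) → ℝ} {c θ : ℝ}

@[simp] lemma dkappa_self (κ : List (Fin M) → ℝ) (x : ℕ → Fin M) : dkappa κ x x = 0 :=
  dif_pos rfl

lemma dkappa_of_ne {x y : ℕ → Fin M} (h : x ≠ y) :
    dkappa κ x y = κ (prefixWord x (firstDiff x y)) := by
  rw [dkappa, dif_neg h, firstDiff_def, dif_pos h, prefixWord]
  congr!

lemma GeomDecay.prefixWord_le (hdec : GeomDecay κ c θ) (x : ℕ → Fin M) {n m : ℕ} (h : n ≤ m) :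
    κ (prefixWord x m) ≤ c * θ ^ (m - n) * κ (prefixWord x n) := by
  simpa using hdec _ _ (prefixWord_prefix_of_le x h)

section TreeEmbedding

variable (κ) (J : ℕ) [NeZero J]

noncomputable def nodeVector (x : ℕ → Fin M) (n : ℕ) : EuclideanSpace ℝ (Fin J × Fin M) :=
  EuclideanSpace.single ((n : Fin J), x n) (κ (prefixWord x n))

noncomputable def treeEmbedding (x : ℕ → Fin M) : EuclideanSpace ℝ (Fin J × Fin M) :=
  ∑' n, nodeVector κ J x n

variable {κ J}

lemma nodeVector_eq_of_lt_firstDiff {x y : ℕ → Fin M} {n : ℕ} (h : n < firstDiff x y) :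
    nodeVector κ J x n = nodeVector κ J y n := by
  rw [nodeVector, nodeVector, apply_eq_of_lt_firstDiff h,
    prefixWord_congr (x := x) fun i hi => apply_eq_of_lt_firstDiff (hi.trans h)]

lemma norm_nodeVector_le (hκ : ∀ w, 0 ≤ κ w) (hdec : GeomDecay κ c θ)
    (x : ℕ → Fin M) {n m : ℕ} (h : n ≤ m) :
    ‖nodeVector κ J x m‖ ≤ c * θ ^ (m - n) * κ (prefixWord x n) := by
  rw [nodeVector, PiLp.norm_single, Real.norm_of_nonneg (hκ _)]
  exact hdec.prefixWord_le x h

lemma summable_nodeVector (hκ : ∀ w, 0 ≤ κ w) (hdec : GeomDecay κ c θ)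
    (hθ0 : 0 ≤ θ) (hθ1 : θ < 1) (x : ℕ → Fin M) : Summable (nodeVector κ J x) :=
  .of_norm_bounded ((summable_geometric_of_lt_one hθ0 hθ1).mul_left (c * κ []))
    fun n => by simpa [mul_right_comm] using norm_nodeVector_le hκ hdec x n.zero_le

lemma treeEmbedding_sub_eq (hκ : ∀ w, 0 ≤ κ w) (hdec : GeomDecay κ c θ)
    (hθ0 : 0 ≤ θ) (hθ1 : θ < 1) (x y : ℕ → Fin M) :
    treeEmbedding κ J x - treeEmbedding κ J y =
      ∑' k, (nodeVector κ J x (k + firstDiff x y) - nodeVector κ J y (k + firstDiff x y)) := by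
  have hx := summable_nodeVector (J := J) hκ hdec hθ0 hθ1 x
  have hy := summable_nodeVector (J := J) hκ hdec hθ0 hθ1 y
  rw [treeEmbedding, treeEmbedding, ← hx.tsum_sub hy,
    ← (hx.sub hy).sum_add_tsum_nat_add (firstDiff x y),
    Finset.sum_eq_zero fun n hn => ?_, zero_add]
  rw [nodeVector_eq_of_lt_firstDiff (Finset.mem_range.mp hn), sub_self]

lemma norm_nodeVector_sub_le (hκ : ∀ w, 0 ≤ κ w) (hdec : GeomDecay κ c θ)
    (x y : ℕ → Fin M) (k : ℕ) :
    ‖nodeVector κ J x (k + firstDiff x y) - nodeVector κ J y (k + firstDiff x y)‖ ≤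
      2 * c * κ (prefixWord x (firstDiff x y)) * θ ^ k := by
  have hxy : prefixWord y (firstDiff x y) = prefixWord x (firstDiff x y) :=
    prefixWord_congr fun i hi => (apply_eq_of_lt_firstDiff hi).symm
  have hx := norm_nodeVector_le (J := J) hκ hdec x (Nat.le_add_left (firstDiff x y) k)
  have hy := norm_nodeVector_le (J := J) hκ hdec y (Nat.le_add_left (firstDiff x y) k)
  rw [Nat.add_sub_cancel] at hx hy
  rw [hxy] at hy
  calc _ ≤ _ := norm_sub_le _ _
    _ ≤ _ := add_le_add hx hy
    _ = _ := by ring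

lemma le_norm_sum_range_nodeVector_sub {x y : ℕ → Fin M} (hxy : x ≠ y) :
    κ (prefixWord x (firstDiff x y)) ≤
      ‖∑ k ∈ Finset.range J,
        (nodeVector κ J x (k + firstDiff x y) - nodeVector κ J y (k + firstDiff x y))‖ := by
  set N := firstDiff x y
  have hxyN : x N ≠ y N := apply_firstDiff_ne hxy
  have hcoord : (∑ k ∈ Finset.range J,
      (nodeVector κ J x (k + N) - nodeVector κ J y (k + N))) ((N : Fin J), x N) =
        κ (prefixWord x N) := by
    rw [WithLp.ofLp_sum, Finset.sum_apply, Finset.sum_eq_single 0]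
    · simp [nodeVector, hxyN]
    · intro k hk hk0
      have hJk : ¬ J ∣ k := fun h => hk0 (Nat.eq_zero_of_dvd_of_lt h (Finset.mem_range.mp hk))
      simp [nodeVector, hJk]
    · simp [NeZero.ne J]
  calc κ (prefixWord x N) ≤ ‖κ (prefixWord x N)‖ := Real.le_norm_self _
    _ ≤ _ := hcoord ▸ PiLp.norm_apply_le _ _

lemma norm_treeEmbedding_sub_le (hκ : ∀ w, 0 ≤ κ w) (hdec : GeomDecay κ c θ)
    (hθ0 : 0 ≤ θ) (hθ1 : θ < 1) (x y : ℕ → Fin M) :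
    ‖treeEmbedding κ J x - treeEmbedding κ J y‖ ≤
      2 * c / (1 - θ) * κ (prefixWord x (firstDiff x y)) := by
  rw [treeEmbedding_sub_eq hκ hdec hθ0 hθ1]
  exact (norm_tsum_le_of_geometric hθ0 hθ1 (norm_nodeVector_sub_le hκ hdec x y)).trans_eq
    (by ring)

lemma le_norm_treeEmbedding_sub (hκ : ∀ w, 0 ≤ κ w) (hdec : GeomDecay κ c θ)
    (hθ0 : 0 ≤ θ) (hθ1 : θ < 1) (hJ : 4 * c * θ ^ J ≤ 1 - θ) {x y : ℕ → Fin M} (hxy : x ≠ y) :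
    κ (prefixWord x (firstDiff x y)) / 2 ≤ ‖treeEmbedding κ J x - treeEmbedding κ J y‖ := by
  set N := firstDiff x y
  set D : ℕ → EuclideanSpace ℝ (Fin J × Fin M) :=
    fun k => nodeVector κ J x (k + N) - nodeVector κ J y (k + N)
  have hD : Summable D := (summable_nat_add_iff N).mpr
    ((summable_nodeVector hκ hdec hθ0 hθ1 x).sub (summable_nodeVector hκ hdec hθ0 hθ1 y))
  have head : κ (prefixWord x N) ≤ ‖∑ k ∈ Finset.range J, D k‖ :=
    le_norm_sum_range_nodeVector_sub hxy
  have tail : ‖∑' k, D (k + J)‖ ≤ κ (prefixWord x N) / 2 := by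
    have hκN := hκ (prefixWord x N)
    calc _ ≤ 2 * c * κ (prefixWord x N) * θ ^ J / (1 - θ) :=
          norm_tsum_le_of_geometric hθ0 hθ1 fun k => by
            simpa [pow_add, mul_assoc, mul_comm, mul_left_comm] using
              norm_nodeVector_sub_le hκ hdec x y (k + J)
      _ ≤ _ := by rw [div_le_iff₀ (by linarith)]; nlinarith
  rw [treeEmbedding_sub_eq hκ hdec hθ0 hθ1, ← hD.sum_add_tsum_nat_add J]
  linarith [norm_sub_le_norm_add (∑ k ∈ Finset.range J, D k) (∑' k, D (k + J))]

end TreeEmbedding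

theorem fEmbeddable_of_geomDecay_general {M : ℕ}
    (κ : List (Fin M) → ℝ) (hκ : IsWeight κ)
    (c θ : ℝ) (hc : 1 ≤ c) (hθ0 : 0 < θ) (hθ1 : θ < 1)
    (hdec : GeomDecay κ c θ) :
    ∃ (L : ℕ) (c' : ℝ) (φ : (ℕ → Fin M) → EuclideanSpace ℝ (Fin L)),
      1 ≤ c' ∧ ∀ x y : ℕ → Fin M,
        (1 / c') * dkappa κ x y ≤ ‖φ x - φ y‖ ∧
        ‖φ x - φ y‖ ≤ c' * dkappa κ x y := by
  have hκ0 : ∀ w, 0 ≤ κ w := fun w => (hκ.1 w).le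
  obtain ⟨J, hJ⟩ := exists_pow_lt_of_lt_one (show 0 < (1 - θ) / (4 * c) by
    apply div_pos <;> linarith) hθ1
  rw [lt_div_iff₀ (by linarith), mul_comm] at hJ
  have : NeZero J := ⟨by rintro rfl; simp at hJ; linarith⟩
  let e := LinearIsometryEquiv.piLpCongrLeft 2 ℝ ℝ (finProdFinEquiv (m := J) (n := M))
  refine ⟨J * M, 2 * c / (1 - θ), fun x => e (treeEmbedding κ J x),
    by rw [le_div_iff₀ (by linarith)]; linarith, fun x y => ?_⟩
  rw [← map_sub, e.norm_map]
  obtain rfl | hxy := eq_or_ne x y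
  · simp
  rw [dkappa_of_ne hxy]
  refine ⟨le_trans ?_ (le_norm_treeEmbedding_sub hκ0 hdec hθ0.le hθ1 hJ.le hxy),
    norm_treeEmbedding_sub_le hκ0 hdec hθ0.le hθ1 x y⟩
  have := hκ0 (prefixWord x (firstDiff x y))
  rw [one_div_div, div_mul_eq_mul_div, div_le_div_iff₀ (by positivity) two_pos]
  nlinarith

/-- An ultrametric Cantor set `((Fin M)^ℕ, d_κ)` with a geometrically decaying
weight is f-embeddable into a finite-dimensional Euclidean space. -/
theorem fEmbeddable_of_geomDecay {M : ℕ} (hM : 2 ≤ M)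
    (κ : List (Fin M) → ℝ) (hκ : IsWeight κ)
    (c θ : ℝ) (hc : 1 ≤ c) (hθ0 : 0 < θ) (hθ1 : θ < 1)
    (hdec : GeomDecay κ c θ) :
    ∃ (L : ℕ) (c' : ℝ) (φ : (ℕ → Fin M) → EuclideanSpace ℝ (Fin L)),
      1 ≤ c' ∧ ∀ x y : ℕ → Fin M,
        (1 / c') * dkappa κ x y ≤ ‖φ x - φ y‖ ∧
        ‖φ x - φ y‖ ≤ c' * dkappa κ x y :=
  fEmbeddable_of_geomDecay_general κ hκ c θ hc hθ0 hθ1 hdec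
end

section
/- Let M ≥ 2 be an integer and let κ be a weight on finite words over Fin M having geometric decay with constants c ≥ 1 and θ ∈ (0,1). Then for every natural number L satisfying θ^L < 1/(M·c + 1) there exist a constant c' ≥ 1 and a map φ : (Fin M)^ℕ → ℝ^L (Euclidean norm) such that (1/c')·d_κ(x,y) ≤ ‖φ(x) − φ(y)‖ ≤ c'·d_κ(x,y) for all x, y. In particular the smallest dimension of a bi-Lipschitz embedding of ((Fin M)^ℕ, d_κ) into a Euclidean space is at most ln(M·c + 1)/|ln θ| + 1. -/
open Function

lemma add_mul_injective (j : ℕ) {L : ℕ} (hL : L ≠ 0) : Injective fun k => j + k * L :=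
  (add_right_injective j).comp (mul_left_injective₀ hL)

section GeometricTail

variable {g : ℕ → ℝ} {n : ℕ} {A θ : ℝ}

lemma summable_of_abs_le_geometric (hθ0 : 0 ≤ θ) (hθ1 : θ < 1)
    (hbound : ∀ t, |g (n + t)| ≤ A * θ ^ t) : Summable g :=
  (summable_nat_add_iff n).mp <| .of_norm_bounded
    ((summable_geometric_of_lt_one hθ0 hθ1).mul_left A) fun t => by
      simpa only [add_comm t n, Real.norm_eq_abs] using hbound t

lemma abs_tsum_comp_le_of_abs_le_geometric (hθ0 : 0 ≤ θ) (hθ1 : θ < 1)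
    (hzero : ∀ m < n, g m = 0) (hbound : ∀ t, |g (n + t)| ≤ A * θ ^ t)
    {i : ℕ → ℕ} (hi : Injective i) : |∑' k, g (i k)| ≤ A / (1 - θ) := by
  have hg : Summable fun m => |g m| := (summable_of_abs_le_geometric hθ0 hθ1 hbound).abs
  have hsupp : support (fun m => |g m|) ⊆ Set.range (n + ·) := by
    intro m hm
    have hnm : n ≤ m := not_lt.mp fun h => hm (by simp only [hzero m h, abs_zero])
    exact ⟨m - n, Nat.add_sub_cancel' hnm⟩
  have hgi : Summable fun k => ‖g (i k)‖ := hg.comp_injective hi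
  calc |∑' k, g (i k)| ≤ ∑' k, |g (i k)| := norm_tsum_le_tsum_norm hgi
    _ ≤ ∑' m, |g m| := tsum_comp_le_tsum_of_inj hg (fun _ => abs_nonneg _) hi
    _ = ∑' t, |g (n + t)| := ((add_right_injective n).tsum_eq hsupp).symm
    _ ≤ A / (1 - θ) := hasSum_le hbound (hg.comp_injective (add_right_injective n)).hasSum
        ((hasSum_geometric_of_lt_one hθ0 hθ1).mul_left A)

lemma tsum_mod_add_mul_eq (hzero : ∀ m < n, g m = 0) {L : ℕ} (hL : 0 < L) :
    ∑' k, g (n % L + k * L) = ∑' t, g (n + t * L) := by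
  have hsupp : support (fun k => g (n % L + k * L)) ⊆ Set.range (n / L + ·) := by
    intro k hk
    have hn : n ≤ n % L + k * L := not_lt.mp fun h => hk (hzero _ h)
    have hdiv : n / L ≤ k := Nat.lt_succ_iff.mp <| (Nat.div_lt_iff_lt_mul hL).mpr <| by
      nlinarith [Nat.mod_lt n hL]
    exact ⟨k - n / L, Nat.add_sub_cancel' hdiv⟩
  rw [← (add_right_injective (n / L)).tsum_eq hsupp]
  congr 1 with t
  rw [add_mul, ← add_assoc, mul_comm (n / L), Nat.mod_add_div]

lemma abs_tsum_mod_add_mul_sub_le (hθ0 : 0 ≤ θ) (hθ1 : θ < 1)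
    (hzero : ∀ m < n, g m = 0) (hbound : ∀ t, |g (n + t)| ≤ A * θ ^ t) {L : ℕ} (hL : 0 < L) :
    |∑' k, g (n % L + k * L) - g n| ≤ A * θ ^ L / (1 - θ ^ L) := by
  have hθL0 : 0 ≤ θ ^ L := pow_nonneg hθ0 L
  have hθL1 : θ ^ L < 1 := pow_lt_one₀ hθ0 hθ1 hL.ne'
  have hsum : Summable fun t => g (n + t * L) :=
    (summable_of_abs_le_geometric hθ0 hθ1 hbound).comp_injective (add_mul_injective n hL.ne')
  rw [tsum_mod_add_mul_eq hzero hL, hsum.tsum_eq_zero_add, zero_mul, add_zero,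
    add_sub_cancel_left, div_eq_mul_inv, ← Real.norm_eq_abs]
  refine tsum_of_norm_bounded ((hasSum_geometric_of_lt_one hθL0 hθL1).mul_left (A * θ ^ L))
    fun t => ?_
  rw [Real.norm_eq_abs]
  calc |g (n + (t + 1) * L)| ≤ A * θ ^ ((t + 1) * L) := hbound _
    _ = A * θ ^ L * (θ ^ L) ^ t := by ring

end GeometricTail

lemma EuclideanSpace.norm_le_sqrt_card_mul {ι : Type*} [Fintype ι] (v : EuclideanSpace ℝ ι)
    {B : ℝ} (hv : ∀ i, |v i| ≤ B) : ‖v‖ ≤ √(Fintype.card ι) * B := by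
  rcases isEmpty_or_nonempty ι with hι | ⟨⟨i⟩⟩
  · simp [Subsingleton.elim v 0]
  have hB : 0 ≤ B := (abs_nonneg _).trans (hv i)
  rw [EuclideanSpace.norm_eq, ← Real.sqrt_sq hB, ← Real.sqrt_mul (Nat.cast_nonneg _)]
  refine Real.sqrt_le_sqrt ?_
  calc ∑ i, ‖v i‖ ^ 2 ≤ ∑ _i : ι, B ^ 2 := by
        gcongr with i; exact Real.norm_eq_abs _ ▸ hv i
    _ = Fintype.card ι * B ^ 2 := by simp

lemma exists_nat_le_log_div_add_one_pow_lt {a θ : ℝ} (ha : 1 ≤ a) (hθ0 : 0 < θ) (hθ1 : θ < 1) :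
    ∃ L : ℕ, (L : ℝ) ≤ Real.log a / |Real.log θ| + 1 ∧ θ ^ L < 1 / a := by
  set r := Real.log a / |Real.log θ|
  have hlogθ : |Real.log θ| = -Real.log θ := abs_of_neg (Real.log_neg hθ0 hθ1)
  have hlogθ0 : 0 < |Real.log θ| := by rw [hlogθ]; linarith [Real.log_neg hθ0 hθ1]
  have hr0 : 0 ≤ r := div_nonneg (Real.log_nonneg ha) hlogθ0.le
  refine ⟨⌊r⌋₊ + 1, by push_cast; linarith [Nat.floor_le hr0], ?_⟩
  have hrL : Real.log a < (⌊r⌋₊ + 1 : ℕ) * |Real.log θ| :=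
    (div_lt_iff₀ hlogθ0).mp (by push_cast; exact Nat.lt_floor_add_one r)
  rw [← Real.log_lt_log_iff (by positivity) (by positivity), Real.log_pow, one_div,
    Real.log_inv]
  rw [hlogθ] at hrL
  linarith

namespace Michon

variable {M : ℕ}

def prefixWord (x : ℕ → Fin M) (n : ℕ) : List (Fin M) := List.ofFn fun i : Fin n => x i

lemma length_prefixWord (x : ℕ → Fin M) (n : ℕ) : (prefixWord x n).length = n :=
  List.length_ofFn

lemma prefixWord_isPrefix (x : ℕ → Fin M) {n m : ℕ} (h : n ≤ m) :
    prefixWord x n <+: prefixWord x m := by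
  have := List.take_prefix n (prefixWord x m)
  rwa [prefixWord, ← Fin.ofFn_take_eq_take_ofFn h] at this

lemma prefixWord_congr {x y : ℕ → Fin M} {n : ℕ} (h : ∀ i < n, x i = y i) :
    prefixWord x n = prefixWord y n :=
  List.ofFn_inj.mpr <| funext fun i => h i i.2

lemma dkappa_self (κ : List (Fin M) → ℝ) (x : ℕ → Fin M) : dkappa κ x x = 0 :=
  dif_pos rfl

lemma exists_dkappa_eq (κ : List (Fin M) → ℝ) {x y : ℕ → Fin M} (hxy : x ≠ y) :
    ∃ n, (∀ i < n, x i = y i) ∧ x n ≠ y n ∧ dkappa κ x y = κ (prefixWord x n) :=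
  ⟨_, fun _ hi => not_not.mp (Nat.find_min _ hi), Nat.find_spec (Function.ne_iff.mp hxy),
    dif_neg hxy⟩

lemma dkappa_nonneg {κ : List (Fin M) → ℝ} (hκ : ∀ w, 0 ≤ κ w) (x y : ℕ → Fin M) :
    0 ≤ dkappa κ x y := by
  by_cases hxy : x = y
  · rw [hxy, dkappa_self]
  · obtain ⟨n, -, -, hd⟩ := exists_dkappa_eq κ hxy
    exact hd ▸ hκ _

variable {κ : List (Fin M) → ℝ} {c θ : ℝ}

variable (κ) in
def digitTerm (x : ℕ → Fin M) (m : ℕ) : ℝ := κ (prefixWord x m) * (x m : ℕ)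

lemma digitTerm_nonneg (hκ : ∀ w, 0 ≤ κ w) (x : ℕ → Fin M) (m : ℕ) : 0 ≤ digitTerm κ x m :=
  mul_nonneg (hκ _) (Nat.cast_nonneg _)

lemma digitTerm_le (hκ : ∀ w, 0 ≤ κ w) (hdec : GeomDecay κ c θ) (x : ℕ → Fin M) {n m : ℕ}
    (h : n ≤ m) : digitTerm κ x m ≤ (M - 1) * c * κ (prefixWord x n) * θ ^ (m - n) := by
  have hx : ((x m : ℕ) : ℝ) + 1 ≤ M := by exact_mod_cast (x m).isLt
  have hκm : κ (prefixWord x m) ≤ c * θ ^ (m - n) * κ (prefixWord x n) := by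
    simpa only [length_prefixWord] using hdec _ _ (prefixWord_isPrefix x h)
  calc digitTerm κ x m ≤ κ (prefixWord x m) * (M - 1) :=
        mul_le_mul_of_nonneg_left (by linarith) (hκ _)
    _ ≤ c * θ ^ (m - n) * κ (prefixWord x n) * (M - 1) :=
        mul_le_mul_of_nonneg_right hκm (by linarith [Nat.cast_nonneg (α := ℝ) (x m : ℕ)])
    _ = (M - 1) * c * κ (prefixWord x n) * θ ^ (m - n) := by ring

lemma summable_digitTerm (hκ : ∀ w, 0 ≤ κ w) (hdec : GeomDecay κ c θ) (hθ0 : 0 ≤ θ)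
    (hθ1 : θ < 1) (x : ℕ → Fin M) : Summable (digitTerm κ x) :=
  summable_of_abs_le_geometric (n := 0) hθ0 hθ1 fun t => by
    simpa only [abs_of_nonneg (digitTerm_nonneg hκ x _), zero_add, Nat.sub_zero] using
      digitTerm_le hκ hdec x (Nat.zero_le t)

section Difference

variable {x y : ℕ → Fin M} {n : ℕ} (hxy : ∀ i < n, x i = y i)
include hxy

lemma digitTerm_eq_of_lt {m : ℕ} (hm : m < n) : digitTerm κ x m = digitTerm κ y m := by
  rw [digitTerm, digitTerm, prefixWord_congr fun i hi => hxy i (hi.trans hm), hxy m hm]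

lemma abs_digitTerm_sub_le (hκ : ∀ w, 0 ≤ κ w) (hdec : GeomDecay κ c θ) (t : ℕ) :
    |digitTerm κ x (n + t) - digitTerm κ y (n + t)|
      ≤ (M - 1) * c * κ (prefixWord x n) * θ ^ t := by
  have hle : n ≤ n + t := Nat.le_add_right n t
  have hy := digitTerm_le hκ hdec y hle
  rw [← prefixWord_congr hxy] at hy
  simpa only [Nat.add_sub_cancel_left] using abs_sub_le_of_nonneg_of_le
    (digitTerm_nonneg hκ x _) (digitTerm_le hκ hdec x hle) (digitTerm_nonneg hκ y _) hy

lemma le_abs_digitTerm_sub (hκ : ∀ w, 0 ≤ κ w) (hn : x n ≠ y n) :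
    κ (prefixWord x n) ≤ |digitTerm κ x n - digitTerm κ y n| := by
  have hdigit : (1 : ℝ) ≤ |((x n : ℕ) : ℝ) - (y n : ℕ)| := by
    have hval : ((x n : ℕ) : ℤ) - (y n : ℕ) ≠ 0 :=
      sub_ne_zero.mpr (by exact_mod_cast Fin.val_ne_of_ne hn)
    exact_mod_cast Int.one_le_abs hval
  rw [digitTerm, digitTerm, ← prefixWord_congr hxy, ← mul_sub, abs_mul, abs_of_nonneg (hκ _)]
  exact le_mul_of_one_le_right (hκ _) hdigit

end Difference

variable (κ) in
noncomputable def embedding (L : ℕ) (x : ℕ → Fin M) : EuclideanSpace ℝ (Fin L) :=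
  WithLp.toLp 2 fun j => ∑' k, digitTerm κ x (j + k * L)

lemma embedding_sub_apply (hκ : ∀ w, 0 ≤ κ w) (hdec : GeomDecay κ c θ) (hθ0 : 0 ≤ θ)
    (hθ1 : θ < 1) {L : ℕ} (x y : ℕ → Fin M) (j : Fin L) :
    (embedding κ L x - embedding κ L y) j
      = ∑' k, (digitTerm κ x (j + k * L) - digitTerm κ y (j + k * L)) :=
  have hinj := add_mul_injective j (Fin.pos j).ne'
  (((summable_digitTerm hκ hdec hθ0 hθ1 x).comp_injective hinj).tsum_sub
    ((summable_digitTerm hκ hdec hθ0 hθ1 y).comp_injective hinj)).symm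

lemma norm_embedding_sub_le (hκ : ∀ w, 0 ≤ κ w) (hdec : GeomDecay κ c θ) (hθ0 : 0 ≤ θ)
    (hθ1 : θ < 1) (L : ℕ) (x y : ℕ → Fin M) :
    ‖embedding κ L x - embedding κ L y‖ ≤ √L * ((M - 1) * c / (1 - θ)) * dkappa κ x y := by
  by_cases hxy : x = y
  · rw [hxy, dkappa_self, sub_self, norm_zero, mul_zero]
  obtain ⟨n, hagree, -, hd⟩ := exists_dkappa_eq κ hxy
  have hcoord (j : Fin L) : |(embedding κ L x - embedding κ L y) j|
      ≤ (M - 1) * c * κ (prefixWord x n) / (1 - θ) := by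
    rw [embedding_sub_apply hκ hdec hθ0 hθ1]
    exact abs_tsum_comp_le_of_abs_le_geometric hθ0 hθ1
      (fun m hm => sub_eq_zero.mpr (digitTerm_eq_of_lt hagree hm))
      (abs_digitTerm_sub_le hagree hκ hdec) (add_mul_injective j (Fin.pos j).ne')
  calc ‖embedding κ L x - embedding κ L y‖
      ≤ √(Fintype.card (Fin L)) * ((M - 1) * c * κ (prefixWord x n) / (1 - θ)) :=
        EuclideanSpace.norm_le_sqrt_card_mul _ hcoord
    _ = √L * ((M - 1) * c / (1 - θ)) * dkappa κ x y := by
        rw [Fintype.card_fin, hd]; ring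

lemma dkappa_le_mul_norm_embedding_sub (hκ : ∀ w, 0 ≤ κ w) (hdec : GeomDecay κ c θ)
    (hθ0 : 0 ≤ θ) (hθ1 : θ < 1) {L : ℕ} (hL : 0 < L) (hθL : θ ^ L * (M * c + 1) < 1)
    (x y : ℕ → Fin M) :
    dkappa κ x y ≤ M * ‖embedding κ L x - embedding κ L y‖ := by
  by_cases hxy : x = y
  · rw [hxy, dkappa_self, sub_self, norm_zero, mul_zero]
  obtain ⟨n, hagree, hne, hd⟩ := exists_dkappa_eq κ hxy
  set d := κ (prefixWord x n)
  set g := fun m => digitTerm κ x m - digitTerm κ y m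
  set S := ∑' k, g (n % L + k * L)
  set tail := (M - 1) * c * d * θ ^ L / (1 - θ ^ L)
  have hM : (1 : ℝ) ≤ M := by exact_mod_cast Fin.pos (x 0)
  have hhead : d ≤ |g n| := le_abs_digitTerm_sub hagree hκ hne
  have htail : |S - g n| ≤ tail := abs_tsum_mod_add_mul_sub_le hθ0 hθ1
    (fun m hm => sub_eq_zero.mpr (digitTerm_eq_of_lt hagree hm))
    (abs_digitTerm_sub_le hagree hκ hdec) hL
  have hθL1 : θ ^ L < 1 := pow_lt_one₀ hθ0 hθ1 hL.ne'
  have hMtail : M * tail ≤ (M - 1) * d := by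
    rw [← mul_div_assoc, div_le_iff₀ (by linarith)]
    have hkey : M * c * θ ^ L ≤ 1 - θ ^ L := by linarith
    calc M * ((M - 1) * c * d * θ ^ L) = (M - 1) * d * (M * c * θ ^ L) := by ring
      _ ≤ (M - 1) * d * (1 - θ ^ L) :=
        mul_le_mul_of_nonneg_left hkey (mul_nonneg (by linarith) (hκ _))
  have hS : (embedding κ L x - embedding κ L y) ⟨n % L, Nat.mod_lt n hL⟩ = S :=
    embedding_sub_apply hκ hdec hθ0 hθ1 x y _
  calc dkappa κ x y = M * d - (M - 1) * d := by rw [hd]; ring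
    _ ≤ M * (d - tail) := by linarith
    _ ≤ M * |S| := by
        gcongr
        linarith [abs_sub_abs_le_abs_sub (g n) S, abs_sub_comm S (g n)]
    _ ≤ M * ‖embedding κ L x - embedding κ L y‖ := by
        rw [← hS, ← Real.norm_eq_abs]
        gcongr
        exact PiLp.norm_apply_le _ _

theorem exists_biLipschitz_embedding (hκ : ∀ w, 0 ≤ κ w) (hdec : GeomDecay κ c θ)
    (hM : 1 ≤ M) (hc : 0 ≤ c) (hθ0 : 0 ≤ θ) (hθ1 : θ < 1) {L : ℕ}
    (hθL : θ ^ L < 1 / (M * c + 1)) :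
    ∃ (c' : ℝ) (φ : (ℕ → Fin M) → EuclideanSpace ℝ (Fin L)),
      1 ≤ c' ∧ ∀ x y : ℕ → Fin M,
        (1 / c') * dkappa κ x y ≤ ‖φ x - φ y‖ ∧ ‖φ x - φ y‖ ≤ c' * dkappa κ x y := by
  have hM' : (1 : ℝ) ≤ M := by exact_mod_cast hM
  have hθL' : θ ^ L * (M * c + 1) < 1 := (lt_div_iff₀ (by positivity)).mp hθL
  have hL : 0 < L := Nat.pos_of_ne_zero fun h => by
    rw [h, pow_zero, one_mul] at hθL'
    nlinarith
  set c' := max (M : ℝ) (√L * ((M - 1) * c / (1 - θ)))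
  refine ⟨c', embedding κ L, hM'.trans (le_max_left _ _), fun x y => ⟨?_, ?_⟩⟩
  · rw [one_div_mul_eq_div, div_le_iff₀' (by positivity)]
    calc dkappa κ x y ≤ M * ‖embedding κ L x - embedding κ L y‖ :=
          dkappa_le_mul_norm_embedding_sub hκ hdec hθ0 hθ1 hL hθL' x y
      _ ≤ c' * ‖embedding κ L x - embedding κ L y‖ := by gcongr; exact le_max_left _ _
  · calc ‖embedding κ L x - embedding κ L y‖
        ≤ √L * ((M - 1) * c / (1 - θ)) * dkappa κ x y :=
          norm_embedding_sub_le hκ hdec hθ0 hθ1 L x y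
      _ ≤ c' * dkappa κ x y := by
          gcongr
          · exact dkappa_nonneg hκ x y
          · exact le_max_right _ _

end Michon

/-- Quantitative embedding: for every `L` with `θ^L < 1/(M·c+1)` there is a
bi-Lipschitz map `(Fin M)^ℕ → ℝ^L`; in particular the smallest embedding
dimension is at most `ln(M·c+1)/|ln θ| + 1`. -/
theorem fEmbeddable_dimension_bound {M : ℕ} (hM : 2 ≤ M)
    (κ : List (Fin M) → ℝ) (hκ : IsWeight κ)
    (c θ : ℝ) (hc : 1 ≤ c) (hθ0 : 0 < θ) (hθ1 : θ < 1)
    (hdec : GeomDecay κ c θ) :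
    (∀ L : ℕ, θ ^ L < 1 / (M * c + 1) →
      ∃ (c' : ℝ) (φ : (ℕ → Fin M) → EuclideanSpace ℝ (Fin L)),
        1 ≤ c' ∧ ∀ x y : ℕ → Fin M,
          (1 / c') * dkappa κ x y ≤ ‖φ x - φ y‖ ∧
          ‖φ x - φ y‖ ≤ c' * dkappa κ x y) ∧
    (∃ L : ℕ, (L : ℝ) ≤ Real.log (M * c + 1) / |Real.log θ| + 1 ∧
      ∃ (c' : ℝ) (φ : (ℕ → Fin M) → EuclideanSpace ℝ (Fin L)),
        1 ≤ c' ∧ ∀ x y : ℕ → Fin M,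
          (1 / c') * dkappa κ x y ≤ ‖φ x - φ y‖ ∧
          ‖φ x - φ y‖ ≤ c' * dkappa κ x y) := by
  have hembed := fun L => Michon.exists_biLipschitz_embedding (L := L) (fun w => (hκ.1 w).le)
    hdec (one_le_two.trans hM) (zero_le_one.trans hc) hθ0.le hθ1
  obtain ⟨L, hL, hθL⟩ := exists_nat_le_log_div_add_one_pow_lt
    (le_add_of_nonneg_left (by positivity : (0 : ℝ) ≤ M * c)) hθ0 hθ1
  exact ⟨hembed, L, hL, hembed L hθL⟩
end

section
/- Let k ≥ 1 and let x : ℤ → Fin k be linearly repetitive: there exists a constant K > 1 such that for every n ≥ 1, every word of length n occurring in x occurs as a factor of every word of length ⌈K·n⌉ occurring in x. Let Ξ(x) ⊆ (Fin k)^ℤ be the closure, for the product topology, of the shift-orbit {m ↦ x(m+j) : j ∈ ℤ} of x, equipped with the combinatorial metric D. Then (Ξ(x), D) is f-embeddable: there exist L ∈ ℕ, c ≥ 1 and φ : Ξ(x) → ℝ^L with (1/c)·D(y,z) ≤ ‖φ(y) − φ(z)‖ ≤ c·D(y,z) for all y, z ∈ Ξ(x). -/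
-- The combinatorial metric on `A^ℤ`: `D(y,y) = 0`, and for `y ≠ z`,
-- `D(y,z) = 1/(N+1)` where `N = min{|n| : y(n) ≠ z(n)}`.
open Classical in
noncomputable def combDist {A : Type*} (y z : ℤ → A) : ℝ :=
  if h : y = z then 0
  else
    have hex : ∃ N : ℕ, y (N : ℤ) ≠ z (N : ℤ) ∨ y (-(N : ℤ)) ≠ z (-(N : ℤ)) := by
      obtain ⟨n, hn⟩ := Function.ne_iff.mp h
      refine ⟨n.natAbs, ?_⟩
      rcases Int.natAbs_eq n with h1 | h1
      · exact Or.inl (by rwa [← h1])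
      · exact Or.inr (by rwa [← h1])
    1 / ((Nat.find hex : ℝ) + 1)

/-- The shift orbit of a two-sided sequence. -/
def shiftOrbit {A : Type*} (x : ℤ → A) : Set (ℤ → A) :=
  {y | ∃ j : ℤ, y = fun m => x (m + j)}

/-- A subset `Ξ` of `A^ℤ`, with the combinatorial metric, is f-embeddable if
there is a bi-Lipschitz map from `Ξ` into some finite-dimensional Euclidean
space. -/
def FEmbeddableSubshift {A : Type*} (Ξ : Set (ℤ → A)) : Prop :=
  ∃ (L : ℕ) (c : ℝ) (φ : Ξ → EuclideanSpace ℝ (Fin L)),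
    1 ≤ c ∧ ∀ y z : Ξ,
      (1 / c) * combDist (y : ℤ → A) (z : ℤ → A) ≤ ‖φ y - φ z‖ ∧
      ‖φ y - φ z‖ ≤ c * combDist (y : ℤ → A) (z : ℤ → A)

/-- A finite word `w` occurs in a two-sided sequence `y`. -/
def occursIn {A : Type*} (w : List A) (y : ℤ → A) : Prop :=
  ∃ i : ℤ, ∀ j : Fin w.length, y (i + (j : ℕ)) = w.get j

/-- Linear repetitivity: there is `K > 1` such that every word of length `n ≥ 1`
occurring in `x` occurs as a factor of every word of length `⌈K·n⌉` occurring
in `x`. -/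
def LinearlyRepetitive {A : Type*} (x : ℤ → A) : Prop :=
  ∃ K : ℝ, 1 < K ∧ ∀ n : ℕ, 1 ≤ n → ∀ u v : List A,
    u.length = n → v.length = ⌈K * n⌉₊ → occursIn u x → occursIn v x → u <:+: v

/-!
Code a point `y` of the subshift by colours `c n y` of its central blocks of radius `4ⁿ`. If there
are at most `M` colours and they separate any two distinct blocks with the same central block of the
previous level, then `y ↦ ∑ₙ 4⁻ⁿ e_{c n y} ∈ ℝ^M` is bi-Lipschitz: both `‖φ y - φ z‖` and `D(y, z)`
are comparable to `4⁻ʲ`, where `j` is the first level at which `y` and `z` differ.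

A block is coloured through its first occurrence time `t` in `x`. If `x` is periodic, `t` is below
the period. Otherwise, linear recurrence bounds `t` by `2 K R` for a block of radius `R`, while two
occurrences of one block of radius `r` lie more than `r / (K + 1)` apart, else `x` would be
periodic. So `t` divided by this gap separates sibling blocks and takes `O(K²)` values.
-/

open Function

variable {A : Type*}

section CombDist

lemma combDist_le_of_agree {y z : ℤ → A} {R : ℕ} (h : ∀ p : ℤ, p.natAbs < R → y p = z p) :
    combDist y z ≤ 1 / (R + 1) := by
  classical
  by_cases hyz : y = z
  · rw [combDist, dif_pos hyz]
    positivity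
  rw [combDist, dif_neg hyz]
  refine one_div_le_one_div_of_le (by positivity) (add_le_add_left ?_ _)
  refine Nat.cast_le.mpr (Nat.le_find_iff _ _ |>.mpr fun m hm => ?_)
  push Not
  exact ⟨h m (by simpa using hm), h (-m) (by simpa using hm)⟩

lemma one_div_le_combDist {y z : ℤ → A} {p : ℤ} (h : y p ≠ z p) :
    1 / ((p.natAbs : ℝ) + 1) ≤ combDist y z := by
  classical
  have hyz : y ≠ z := fun hyz => h (congrFun hyz p)
  rw [combDist, dif_neg hyz]
  refine one_div_le_one_div_of_le (by positivity) (add_le_add_left ?_ _)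
  refine Nat.cast_le.mpr (Nat.find_le ?_)
  rcases Int.natAbs_eq p with hp | hp
  · exact Or.inl (hp ▸ h)
  · exact Or.inr (hp ▸ h)

end CombDist

def occTimes (x y : ℤ → A) (R : ℕ) : Set ℕ :=
  {t | ∀ p : ℤ, p.natAbs < R → x (p + t) = y p}

noncomputable def firstOcc (x y : ℤ → A) (R : ℕ) : ℕ :=
  sInf (occTimes x y R)

section FirstOcc

variable {x y z : ℤ → A} {R : ℕ}

lemma firstOcc_congr (h : ∀ p : ℤ, p.natAbs < R → y p = z p) :
    firstOcc x y R = firstOcc x z R := by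
  have : occTimes x y R = occTimes x z R := by
    ext t
    exact forall₂_congr fun p hp => by rw [h p hp]
  rw [firstOcc, this, firstOcc]

lemma firstOcc_mem (hy : (occTimes x y R).Nonempty) : firstOcc x y R ∈ occTimes x y R :=
  Nat.sInf_mem hy

lemma agree_of_firstOcc_eq (hy : (occTimes x y R).Nonempty) (hz : (occTimes x z R).Nonempty)
    (h : firstOcc x y R = firstOcc x z R) : ∀ p : ℤ, p.natAbs < R → y p = z p := fun p hp => by
  rw [← firstOcc_mem hy p hp, ← firstOcc_mem hz p hp, h]

lemma firstOcc_eq_iff (hy : (occTimes x y R).Nonempty) (hz : (occTimes x z R).Nonempty) :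
    firstOcc x y R = firstOcc x z R ↔ ∀ p : ℤ, p.natAbs < R → y p = z p :=
  ⟨agree_of_firstOcc_eq hy hz, firstOcc_congr⟩

end FirstOcc

lemma exists_shift_agree_of_mem_closure [TopologicalSpace A] [DiscreteTopology A] {x y : ℤ → A}
    (hy : y ∈ closure (shiftOrbit x)) (R : ℕ) :
    ∃ j : ℤ, ∀ p : ℤ, p.natAbs < R → x (p + j) = y p := by
  have hfin : {p : ℤ | p.natAbs < R}.Finite :=
    (Set.finite_Ioo (-(R : ℤ)) R).subset fun p hp => by
      simp only [Set.mem_ofPred_eq] at hp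
      simp
      omega
  obtain ⟨_, hz, j, rfl⟩ := mem_closure_iff.mp hy _
    (isOpen_set_pi hfin fun p _ => isOpen_discrete {y p}) fun p _ => rfl
  exact ⟨j, hz⟩

lemma Function.Periodic.exists_occTime_lt [TopologicalSpace A] [DiscreteTopology A]
    {x y : ℤ → A} {T : ℕ} (hx : Periodic x T) (hT : 0 < T) (hy : y ∈ closure (shiftOrbit x))
    (R : ℕ) : ∃ t ∈ occTimes x y R, t < T := by
  obtain ⟨j, hj⟩ := exists_shift_agree_of_mem_closure hy R
  have h0 : 0 ≤ j % T := Int.emod_nonneg j (by omega)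
  have hT' : j % T < T := Int.emod_lt_of_pos j (by omega)
  refine ⟨(j % T).toNat, fun p hp => ?_, by omega⟩
  rw [← hj p hp, ← hx.sub_int_mul_eq (x := p + j) (j / T), Int.cast_id, Int.toNat_of_nonneg h0,
    Int.emod_def]
  ring_nf

def LinearlyRecurrent (x : ℤ → A) (K : ℝ) : Prop :=
  ∀ m : ℕ, 0 < m → ∀ a b : ℤ,
    ∃ s : ℕ, s + m ≤ ⌈K * m⌉₊ ∧ ∀ q : ℕ, q < m → x (b + s + q) = x (a + q)

lemma LinearlyRepetitive.exists_linearlyRecurrent {x : ℤ → A} (h : LinearlyRepetitive x) :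
    ∃ K, 1 < K ∧ LinearlyRecurrent x K := by
  obtain ⟨K, hK, hrep⟩ := h
  refine ⟨K, hK, fun m hm a b => ?_⟩
  have hocc : ∀ (c : ℤ) (l : ℕ), occursIn (List.ofFn fun q : Fin l => x (c + q)) x :=
    fun c l => ⟨c, fun q => by simp⟩
  obtain ⟨s, hs, hget⟩ := List.infix_iff_getElem?.mp
    (hrep m hm _ _ (List.length_ofFn ..) (List.length_ofFn ..) (hocc a m) (hocc b _))
  simp only [List.length_ofFn] at hs
  refine ⟨s, by omega, fun q hq => ?_⟩
  have := hget q (by simpa using hq)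
  rw [List.getElem?_ofFn, dif_pos (by omega), Option.some_inj, List.getElem_ofFn] at this
  rw [← this]
  push_cast
  ring_nf

noncomputable def minGap (K : ℝ) (r : ℕ) : ℕ :=
  ⌊r / (K + 1)⌋₊ + 1

lemma lt_mul_minGap {K : ℝ} (hK : 0 ≤ K) (r : ℕ) : (r : ℝ) < (K + 1) * minGap K r := by
  have := Nat.lt_floor_add_one ((r : ℝ) / (K + 1))
  rw [div_lt_iff₀ (by positivity)] at this
  rw [minGap]
  push_cast
  linarith

namespace LinearlyRecurrent

variable {x : ℤ → A} {K : ℝ}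

/-- A repetition of a block of radius `r` at distance `d` longer than `(K + 1) d` would, by
recurrence, contain every block of length `d + 1`, forcing `x` to be `d`-periodic. -/
lemma radius_lt_of_repeat (hx : LinearlyRecurrent x K) (hK : 0 ≤ K) {a : ℤ} {r d : ℕ}
    (hd : ¬ Periodic x d) (hrep : ∀ p : ℤ, p.natAbs < r → x (p + a + d) = x (p + a)) :
    (r : ℝ) < (K + 1) * d := by
  have hd0 : 0 < d := Nat.pos_of_ne_zero fun h => hd (h ▸ fun i => by simp)
  by_contra hlong
  refine hd fun i => ?_
  obtain ⟨s, hs, hocc⟩ := hx (d + 1) d.succ_pos i (a - r + 1)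
  have hceil : ⌈K * ((d + 1 : ℕ) : ℝ)⌉₊ < 2 * r + d := by
    have := Nat.ceil_lt_add_one (by positivity : 0 ≤ K * ((d + 1 : ℕ) : ℝ))
    have hd1 : (1 : ℝ) ≤ d := by exact_mod_cast hd0
    exact_mod_cast (show (⌈K * ((d + 1 : ℕ) : ℝ)⌉₊ : ℝ) < 2 * r + d by
      push_cast at this ⊢
      nlinarith)
  have hrep' := hrep ((s : ℤ) - r + 1) (by omega)
  calc x (i + d) = x (a - r + 1 + s + d) := (hocc d (by omega)).symm
    _ = x (s - r + 1 + a + d) := by ring_nf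
    _ = x (a - r + 1 + s + (0 : ℕ)) := by rw [hrep']; ring_nf
    _ = x i := by rw [hocc 0 (by omega)]; simp

lemma div_minGap_lt (hx : LinearlyRecurrent x K) (hK : 0 ≤ K)
    (hnp : ∀ d : ℕ, 0 < d → ¬ Periodic x d) {r t t' : ℕ}
    (h : ∀ p : ℤ, p.natAbs < r → x (p + t) = x (p + t')) (htt' : t < t') :
    t / minGap K r < t' / minGap K r := by
  have hgap := hx.radius_lt_of_repeat hK (a := t) (r := r) (hnp (t' - t) (by omega)) fun p hp => by
    rw [h p hp]
    congr 1
    omega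
  have hG : minGap K r ≤ t' - t := by
    refine Nat.succ_le_of_lt (Nat.floor_lt (by positivity) |>.mpr ?_)
    rw [div_lt_iff₀ (by positivity)]
    linarith
  have hG0 : 0 < minGap K r := Nat.succ_pos _
  calc t / minGap K r < t / minGap K r + 1 := Nat.lt_succ_self _
    _ = (t + minGap K r) / minGap K r := (Nat.add_div_right t hG0).symm
    _ ≤ t' / minGap K r := Nat.div_le_div_right (by omega)

lemma exists_occTime_le [TopologicalSpace A] [DiscreteTopology A] (hx : LinearlyRecurrent x K)
    (hK : 0 ≤ K) {y : ℤ → A} (hy : y ∈ closure (shiftOrbit x)) {R : ℕ} (hR : 0 < R) :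
    ∃ t ∈ occTimes x y R, (t : ℝ) ≤ 2 * K * R := by
  obtain ⟨j, hj⟩ := exists_shift_agree_of_mem_closure hy R
  obtain ⟨s, hs, hocc⟩ := hx (2 * R - 1) (by omega) (j - R + 1) 0
  refine ⟨s + R - 1, fun p hp => ?_, ?_⟩
  · calc x (p + (s + R - 1 : ℕ)) = x (0 + s + (p + R - 1).toNat) := by congr 1; omega
      _ = x (j - R + 1 + (p + R - 1).toNat) := hocc _ (by omega)
      _ = y p := by rw [← hj p hp]; congr 1; omega
  · have hceil := Nat.ceil_lt_add_one (by positivity : 0 ≤ K * ((2 * R - 1 : ℕ) : ℝ))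
    have hsR : ((s + R - 1 : ℕ) : ℝ) + R ≤ ⌈K * ((2 * R - 1 : ℕ) : ℝ)⌉₊ := by
      exact_mod_cast (by omega : s + R - 1 + R ≤ s + (2 * R - 1)) |>.trans hs
    have hR1 : (1 : ℝ) ≤ R := by exact_mod_cast hR
    have h2R : ((2 * R - 1 : ℕ) : ℝ) = 2 * R - 1 := by
      rw [Nat.cast_sub (by omega : 1 ≤ 2 * R)]; push_cast; ring
    have ht : ((s + R - 1 : ℕ) : ℝ) = s + R - 1 := by
      rw [Nat.cast_sub (by omega : 1 ≤ s + R)]; push_cast; ring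
    rw [h2R] at hceil hsR
    rw [ht] at hsR ⊢
    nlinarith

end LinearlyRecurrent

section CodeMap

variable {M : ℕ}

noncomputable def codeTerm (a : ℕ → Fin M) (n : ℕ) : EuclideanSpace ℝ (Fin M) :=
  EuclideanSpace.single (a n) ((4 : ℝ)⁻¹ ^ n)

noncomputable def codeMap (a : ℕ → Fin M) : EuclideanSpace ℝ (Fin M) :=
  ∑' n, codeTerm a n

lemma norm_codeTerm (a : ℕ → Fin M) (n : ℕ) : ‖codeTerm a n‖ = (4 : ℝ)⁻¹ ^ n := by
  simp [codeTerm]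

lemma summable_codeTerm (a : ℕ → Fin M) : Summable (codeTerm a) :=
  .of_norm <| by
    simpa only [norm_codeTerm] using summable_geometric_of_lt_one (by norm_num) (by norm_num)

lemma codeMap_sub (a b : ℕ → Fin M) (j : ℕ) :
    codeMap a - codeMap b = ∑ n ∈ Finset.range j, (codeTerm a n - codeTerm b n) +
      ∑' n, (codeTerm a (n + j) - codeTerm b (n + j)) := by
  rw [codeMap, codeMap, ← (summable_codeTerm a).tsum_sub (summable_codeTerm b)]
  exact (((summable_codeTerm a).sub (summable_codeTerm b)).sum_add_tsum_nat_add j).symm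

lemma norm_tsum_codeTerm_sub_le (a b : ℕ → Fin M) (j : ℕ) :
    ‖∑' n, (codeTerm a (n + j) - codeTerm b (n + j))‖ ≤ 8 / 3 * (4 : ℝ)⁻¹ ^ j := by
  have hgeom := (hasSum_geometric_of_lt_one (r := (4 : ℝ)⁻¹) (by norm_num) (by norm_num)).mul_left
    (2 * (4 : ℝ)⁻¹ ^ j)
  refine (tsum_of_norm_bounded hgeom fun n => ?_).trans_eq (by ring)
  calc ‖codeTerm a (n + j) - codeTerm b (n + j)‖
      ≤ ‖codeTerm a (n + j)‖ + ‖codeTerm b (n + j)‖ := norm_sub_le _ _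
    _ = 2 * (4 : ℝ)⁻¹ ^ j * (4 : ℝ)⁻¹ ^ n := by rw [norm_codeTerm, norm_codeTerm, pow_add]; ring

variable {a b : ℕ → Fin M} {j : ℕ}

lemma norm_codeMap_sub_le (hab : ∀ n < j, a n = b n) :
    ‖codeMap a - codeMap b‖ ≤ 8 / 3 * (4 : ℝ)⁻¹ ^ j := by
  rw [codeMap_sub a b j, Finset.sum_eq_zero fun n hn => by
    rw [codeTerm, codeTerm, hab n (Finset.mem_range.mp hn), sub_self], zero_add]
  exact norm_tsum_codeTerm_sub_le a b j

/-- The ratio `1 / 4` makes the term of the first disagreement dominate the rest: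
`∑_{n > j} 2 · 4⁻ⁿ = (2 / 3) · 4⁻ʲ`. -/
lemma le_norm_codeMap_sub (hab : ∀ n < j, a n = b n) (hj : a j ≠ b j) :
    (4 : ℝ)⁻¹ ^ j / 3 ≤ ‖codeMap a - codeMap b‖ := by
  have hhead : ∑ n ∈ Finset.range (j + 1), (codeTerm a n - codeTerm b n) =
      codeTerm a j - codeTerm b j := by
    rw [Finset.sum_range_succ, Finset.sum_eq_zero fun n hn => by
      rw [codeTerm, codeTerm, hab n (Finset.mem_range.mp hn), sub_self], zero_add]
  have hlead : (4 : ℝ)⁻¹ ^ j ≤ ‖codeTerm a j - codeTerm b j‖ := by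
    calc (4 : ℝ)⁻¹ ^ j = ‖(codeTerm a j - codeTerm b j) (a j)‖ := by
          simp [codeTerm, hj]
      _ ≤ _ := PiLp.norm_apply_le _ _
  have htail := norm_tsum_codeTerm_sub_le a b (j + 1)
  rw [codeMap_sub a b (j + 1), hhead]
  have := norm_sub_le (codeTerm a j - codeTerm b j +
    ∑' n, (codeTerm a (n + (j + 1)) - codeTerm b (n + (j + 1))))
    (∑' n, (codeTerm a (n + (j + 1)) - codeTerm b (n + (j + 1))))
  rw [add_sub_cancel_right, pow_succ] at *
  linarith

end CodeMap

section Embedding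

variable {y z : ℤ → A}

lemma exists_first_disagreement (h : y ≠ z) :
    ∃ j : ℕ, (∀ m < j, ∀ p : ℤ, p.natAbs < 4 ^ m → y p = z p) ∧
      ¬ ∀ p : ℤ, p.natAbs < 4 ^ j → y p = z p := by
  classical
  obtain ⟨p, hp⟩ := ne_iff.mp h
  have hex : ∃ j : ℕ, ¬ ∀ q : ℤ, q.natAbs < 4 ^ j → y q = z q :=
    ⟨p.natAbs, fun hall => hp (hall p (Nat.lt_pow_self (by norm_num)))⟩
  exact ⟨Nat.find hex, fun m hm => not_not.mp (Nat.find_min hex hm), Nat.find_spec hex⟩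

lemma combDist_mem_Icc_of_first_disagreement {j : ℕ}
    (hbelow : ∀ m < j, ∀ p : ℤ, p.natAbs < 4 ^ m → y p = z p)
    (hj : ¬ ∀ p : ℤ, p.natAbs < 4 ^ j → y p = z p) :
    combDist y z ∈ Set.Icc ((4 : ℝ)⁻¹ ^ j) (4 * (4 : ℝ)⁻¹ ^ j) := by
  push Not at hj
  obtain ⟨p, hp, hne⟩ := hj
  constructor
  · refine le_trans ?_ (one_div_le_combDist hne)
    rw [inv_pow, ← one_div]
    exact one_div_le_one_div_of_le (by positivity) (by exact_mod_cast hp)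
  · cases j with
    | zero =>
      have := combDist_le_of_agree (R := 0) (y := y) (z := z) (by simp)
      norm_num at this ⊢
      linarith
    | succ m =>
      refine (combDist_le_of_agree (hbelow m m.lt_succ_self)).trans ?_
      rw [show 4 * (4 : ℝ)⁻¹ ^ (m + 1) = 1 / 4 ^ m by
        rw [pow_succ, inv_pow]; field_simp]
      exact one_div_le_one_div_of_le (by positivity) (by push_cast; linarith)

theorem fEmbeddable_of_colouring {Ξ : Set (ℤ → A)} {M : ℕ} (c : ℕ → (ℤ → A) → ℕ)
    (hcM : ∀ n, ∀ y ∈ Ξ, c n y < M)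
    (hc : ∀ n, ∀ y ∈ Ξ, ∀ z ∈ Ξ, (∀ m < n, ∀ p : ℤ, p.natAbs < 4 ^ m → y p = z p) →
      (c n y = c n z ↔ ∀ p : ℤ, p.natAbs < 4 ^ n → y p = z p)) :
    FEmbeddableSubshift Ξ := by
  refine ⟨M, 12, fun y => codeMap fun n => ⟨c n y, hcM n y y.2⟩, by norm_num, fun y z => ?_⟩
  by_cases hyz : y = z
  · subst hyz
    simp [combDist]
  obtain ⟨j, hbelow, hj⟩ := exists_first_disagreement fun h => hyz (Subtype.ext h)
  have hparent : ∀ n ≤ j, ∀ m < n, ∀ p : ℤ, p.natAbs < 4 ^ m → y.1 p = z.1 p :=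
    fun n hn m hm => hbelow m (hm.trans_le hn)
  have hcode_below : ∀ n < j, (⟨c n y, hcM n y y.2⟩ : Fin M) = ⟨c n z, hcM n z z.2⟩ :=
    fun n hn => Fin.ext <| (hc n y y.2 z z.2 (hparent n hn.le)).2 (hbelow n hn)
  have hcode_at : (⟨c j y, hcM j y y.2⟩ : Fin M) ≠ ⟨c j z, hcM j z z.2⟩ :=
    fun h => hj <| (hc j y y.2 z z.2 (hparent j le_rfl)).1 (Fin.ext_iff.mp h)
  have hD := combDist_mem_Icc_of_first_disagreement hbelow hj
  have hlow := le_norm_codeMap_sub hcode_below hcode_at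
  have hup := norm_codeMap_sub_le hcode_below
  constructor <;> linarith [hD.1, hD.2]

end Embedding

theorem Function.Periodic.fEmbeddable [TopologicalSpace A] [DiscreteTopology A] {x : ℤ → A}
    {T : ℕ} (hx : Periodic x T) (hT : 0 < T) : FEmbeddableSubshift (closure (shiftOrbit x)) := by
  have hocc := fun y (hy : y ∈ closure (shiftOrbit x)) R => hx.exists_occTime_lt hT hy R
  refine fEmbeddable_of_colouring (M := T) (fun n y => firstOcc x y (4 ^ n))
    (fun n y hy => ?_) fun n y hy z hz _ => firstOcc_eq_iff ?_ ?_
  · obtain ⟨t, ht, htT⟩ := hocc y hy (4 ^ n)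
    exact (Nat.sInf_le ht).trans_lt htT
  · obtain ⟨t, ht, -⟩ := hocc y hy (4 ^ n)
    exact ⟨t, ht⟩
  · obtain ⟨t, ht, -⟩ := hocc z hz (4 ^ n)
    exact ⟨t, ht⟩

noncomputable def blockColour (x : ℤ → A) (K : ℝ) (n : ℕ) (y : ℤ → A) : ℕ :=
  firstOcc x y (4 ^ n) / minGap K (4 ^ n / 4)

namespace LinearlyRecurrent

variable [TopologicalSpace A] [DiscreteTopology A] {x y z : ℤ → A} {K : ℝ}

lemma blockColour_lt (hx : LinearlyRecurrent x K) (hK : 0 < K) (hy : y ∈ closure (shiftOrbit x))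
    (n : ℕ) : blockColour x K n y < ⌈2 * K * (4 * K + 7)⌉₊ := by
  obtain ⟨t, ht, htle⟩ := hx.exists_occTime_le hK.le hy (by positivity : 0 < 4 ^ n)
  have hfirst : (firstOcc x y (4 ^ n) : ℝ) ≤ t := by exact_mod_cast Nat.sInf_le ht
  have hgap := lt_mul_minGap hK.le (4 ^ n / 4)
  have hR : ((4 ^ n : ℕ) : ℝ) ≤ 4 * ((4 ^ n / 4 : ℕ) : ℝ) + 3 := by exact_mod_cast (by omega)
  have hG : (1 : ℝ) ≤ minGap K (4 ^ n / 4) := by exact_mod_cast Nat.succ_pos _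
  rw [blockColour]
  refine (Nat.div_lt_iff_lt_mul (Nat.succ_pos _)).mpr (Nat.cast_lt (α := ℝ) |>.mp ?_)
  calc (firstOcc x y (4 ^ n) : ℝ) ≤ 2 * K * ((4 ^ n : ℕ) : ℝ) := hfirst.trans htle
    _ < 2 * K * (4 * K + 7) * minGap K (4 ^ n / 4) := by nlinarith
    _ ≤ ((⌈2 * K * (4 * K + 7)⌉₊ * minGap K (4 ^ n / 4) : ℕ) : ℝ) := by
      rw [Nat.cast_mul]
      gcongr
      exact Nat.le_ceil _

lemma blockColour_eq_iff (hx : LinearlyRecurrent x K) (hK : 0 ≤ K)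
    (hnp : ∀ d : ℕ, 0 < d → ¬ Periodic x d) (hy : y ∈ closure (shiftOrbit x))
    (hz : z ∈ closure (shiftOrbit x)) {n : ℕ}
    (hparent : ∀ m < n, ∀ p : ℤ, p.natAbs < 4 ^ m → y p = z p) :
    blockColour x K n y = blockColour x K n z ↔ ∀ p : ℤ, p.natAbs < 4 ^ n → y p = z p := by
  have hR : 0 < 4 ^ n := by positivity
  obtain ⟨ty, hty, -⟩ := hx.exists_occTime_le hK hy hR
  obtain ⟨tz, htz, -⟩ := hx.exists_occTime_le hK hz hR
  rw [← firstOcc_eq_iff ⟨ty, hty⟩ ⟨tz, htz⟩]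
  refine ⟨fun h => ?_, fun h => by rw [blockColour, blockColour, h]⟩
  -- `4 ^ 0 / 4 = 0`: at level `0` there is no parent block.
  have hr : ∀ p : ℤ, p.natAbs < 4 ^ n / 4 → y p = z p := by
    cases n with
    | zero => intro p hp; simp at hp
    | succ m => simpa [pow_succ] using hparent m m.lt_succ_self
  have hrep : ∀ p : ℤ, p.natAbs < 4 ^ n / 4 →
      x (p + firstOcc x y (4 ^ n)) = x (p + firstOcc x z (4 ^ n)) := fun p hp => by
    rw [firstOcc_mem ⟨ty, hty⟩ p (by omega), firstOcc_mem ⟨tz, htz⟩ p (by omega), hr p hp]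
  by_contra hne
  rcases Nat.lt_or_gt_of_ne hne with hlt | hlt
  · exact (hx.div_minGap_lt hK hnp hrep hlt).ne h
  · exact (hx.div_minGap_lt hK hnp (fun p hp => (hrep p hp).symm) hlt).ne' h

theorem fEmbeddable (hx : LinearlyRecurrent x K) (hK : 0 < K)
    (hnp : ∀ d : ℕ, 0 < d → ¬ Periodic x d) : FEmbeddableSubshift (closure (shiftOrbit x)) :=
  fEmbeddable_of_colouring (blockColour x K) (fun n _ hy => hx.blockColour_lt hK hy n)
    fun _ _ hy _ hz hparent => hx.blockColour_eq_iff hK.le hnp hy hz hparent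

end LinearlyRecurrent

theorem linearlyRepetitive_fEmbeddable_general {k : ℕ}
    (x : ℤ → Fin k) (hLR : LinearlyRepetitive x) :
    FEmbeddableSubshift (closure (shiftOrbit x)) := by
  obtain ⟨K, hK, hx⟩ := hLR.exists_linearlyRecurrent
  by_cases hper : ∃ T : ℕ, 0 < T ∧ Periodic x T
  · obtain ⟨T, hT, hxT⟩ := hper
    exact hxT.fEmbeddable hT
  · push Not at hper
    exact hx.fEmbeddable (by linarith) hper

/-- The tiling space (subshift) of a linearly repetitive sequence, with the
combinatorial metric, is f-embeddable. -/
theorem linearlyRepetitive_fEmbeddable {k : ℕ} (hk : 1 ≤ k)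
    (x : ℤ → Fin k) (hLR : LinearlyRepetitive x) :
    FEmbeddableSubshift (closure (shiftOrbit x)) :=
  linearlyRepetitive_fEmbeddable_general x hLR
end

section
/- Let σ₀ : List (Fin 2) → List (Fin 2) be the monoid homomorphism (with respect to concatenation) determined by σ₀([0]) = [0] and σ₀([1]) = [1, 0]. Let b ≥ 1 be an integer and let w be a finite word over Fin 2 that contains both [1, 0] and [1, 1] as factors (contiguous subwords). Then the word σ₀^b(w) (the b-fold iterate of σ₀ applied to w) contains both [1] ++ (0 repeated b times) ++ [1] and [1] ++ (0 repeated b times) ++ [0] as factors. -/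
/-- The Sturmian substitution `σ₀ : 0 ↦ 0, 1 ↦ 10`, extended to finite words over
`Fin 2` by concatenation (so it is a monoid homomorphism for `++`). -/
def sigma0 (w : List (Fin 2)) : List (Fin 2) :=
  w.flatMap fun a => if a = 1 then [1, 0] else [0]

lemma sigma0_append (u v : List (Fin 2)) : sigma0 (u ++ v) = sigma0 u ++ sigma0 v := by
  simp [sigma0]

lemma sigma0_infix {u w : List (Fin 2)} (h : u <:+: w) : sigma0 u <:+: sigma0 w := by
  obtain ⟨s, t, rfl⟩ := h
  exact ⟨sigma0 s, sigma0 t, by simp [sigma0_append]⟩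

lemma sigma0_iter_infix (b : ℕ) {u w : List (Fin 2)} (h : u <:+: w) :
    sigma0^[b] u <:+: sigma0^[b] w := by
  induction b with
  | zero => simpa
  | succ n ih => simpa [Function.iterate_succ_apply'] using sigma0_infix ih

lemma sigma0_iter_append (b : ℕ) (u v : List (Fin 2)) :
    sigma0^[b] (u ++ v) = sigma0^[b] u ++ sigma0^[b] v := by
  induction b generalizing u v with
  | zero => simp
  | succ n ih => simp [Function.iterate_succ_apply, sigma0_append, ih]

lemma sigma0_replicate (k : ℕ) : sigma0 (List.replicate k 0) = List.replicate k 0 := by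
  induction k with
  | zero => simp [sigma0]
  | succ n ih =>
    rw [List.replicate_succ, show ((0:Fin 2) :: List.replicate n 0) = [0] ++ List.replicate n 0 from rfl,
      sigma0_append, ih]
    rfl

lemma sigma0_iter_zero (b : ℕ) : sigma0^[b] [(0 : Fin 2)] = [0] := by
  induction b with
  | zero => rfl
  | succ n ih => rw [Function.iterate_succ_apply', ih]; rfl

lemma sigma0_iter_one (b : ℕ) : sigma0^[b] [(1 : Fin 2)] = 1 :: List.replicate b 0 := by
  induction b with
  | zero => rfl
  | succ n ih =>
    rw [Function.iterate_succ_apply', ih,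
      show ((1:Fin 2) :: List.replicate n 0) = [1] ++ List.replicate n 0 from rfl,
      sigma0_append, sigma0_replicate]
    simp [sigma0, List.replicate_succ]

/-- If a word `w` over `Fin 2` contains both `10` and `11` as factors, then for
every `b ≥ 1` the word `σ₀^b(w)` contains both `1 0^b 1` and `1 0^b 0` as
factors. -/
theorem sigma0_iterate_factors (b : ℕ) (hb : 1 ≤ b) (w : List (Fin 2))
    (h10 : ([1, 0] : List (Fin 2)) <:+: w)
    (h11 : ([1, 1] : List (Fin 2)) <:+: w) :
    (([1] ++ List.replicate b 0 ++ [1] : List (Fin 2)) <:+: sigma0^[b] w) ∧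
    (([1] ++ List.replicate b 0 ++ [0] : List (Fin 2)) <:+: sigma0^[b] w) := by
  have e10 : sigma0^[b] [1, 0] = [1] ++ List.replicate b 0 ++ [0] := by
    rw [show ([1,0] : List (Fin 2)) = [1] ++ [0] from rfl, sigma0_iter_append,
      sigma0_iter_one, sigma0_iter_zero]; simp
  have e11 : sigma0^[b] [1, 1] = ([1] ++ List.replicate b 0) ++ ([1] ++ List.replicate b 0) := by
    rw [show ([1,1] : List (Fin 2)) = [1] ++ [1] from rfl, sigma0_iter_append, sigma0_iter_one]
    simp
  constructor
  · have h := sigma0_iter_infix b h11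
    rw [e11] at h
    refine List.IsInfix.trans ?_ h
    exact ⟨[], List.replicate b 0, by simp⟩
  · have h := sigma0_iter_infix b h10
    rw [e10] at h
    exact h
end
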